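/- (Proposition 2, case 2b) Assume J₁₁ < 0 and J₁₂ > |J₁₁|, and set λ_M = J₁₁ + J₁₂ > 0. If β > 2/λ_M, then f has exactly three critical points in (−1,1)²: the origin (0,0) and the two points ±(x̃,x̃), where x̃ is the unique solution in (0,1) of x = tanh((βλ_M/2)·x). The origin is a saddle (inflection) point, while (x̃,x̃) and (−x̃,−x̃) are local maximum points of f. -/

import Mathlib

/-- The entropy function 𝓘(x) = ((1+x)log(1+x) + (1-x)log(1-x))/2.
Note `Real.log 0 = 0` in Mathlib, which implements the convention 0·log 0 = 0. -/
noncomputable def entI (x : ℝ) : ℝ :=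
  ((1 + x) * Real.log (1 + x) + (1 - x) * Real.log (1 - x)) / 2

/-- Pressure functional of the symmetric zero-field bipartite mean-field model
(α₁ = α₂ = 1/2, J₁₁ = J₂₂, h₁ = h₂ = 0). -/
noncomputable def fSym (β J11 J12 : ℝ) (μ : ℝ × ℝ) : ℝ :=
  β / 8 * (J11 * (μ.1 ^ 2 + μ.2 ^ 2) + 2 * J12 * μ.1 * μ.2) - (entI μ.1 + entI μ.2) / 2

/-- A critical point of f: a point of the open square (−1,1)² where both partial
derivatives of f vanish. -/
def IsCritPt (β J11 J12 : ℝ) (μ : ℝ × ℝ) : Prop :=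
  μ.1 ∈ Set.Ioo (-1 : ℝ) 1 ∧ μ.2 ∈ Set.Ioo (-1 : ℝ) 1 ∧
    deriv (fun x => fSym β J11 J12 (x, μ.2)) μ.1 = 0 ∧
    deriv (fun y => fSym β J11 J12 (μ.1, y)) μ.2 = 0

/-!
On the diagonal, `f` is the Curie–Weiss pressure `g x = c/2 · x² − 𝓘 x` with `c = βλ_M/2 > 1`,
and convexity of `𝓘` gives `f (a, b) ≤ g ((a + b)/2) + β(J₁₁ − J₁₂)(a − b)²/16 ≤ g ((a + b)/2)`.
Since `artanh` is strictly convex on `[0, 1)`, `artanh x / x` increases strictly from `1` at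
`0⁺`, so `artanh x = c x` has exactly one root `x̃` in `(0, 1)`; `g' = c x − artanh x` is
positive on `(0, x̃)` and negative on `(x̃, 1)`, so `g` is maximal at `±x̃` and `±(x̃, x̃)` are
maxima of `f`. Subtracting the two critical point equations `artanh a = β/2 (J₁₁ a + J₁₂ b)`, ...
gives `(artanh a − artanh b)(a − b) = β/2 (J₁₁ − J₁₂)(a − b)²`, whose sides have opposite signs
unless `a = b`. The origin is not a local maximum because `g > 0` on `(0, x̃]`, and not a local
minimum because `f (t, −t) ≤ β(J₁₁ − J₁₂) t²/4 < 0`.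
-/

open Real Set Filter Topology

lemma artanh_eq_half_log_sub {x : ℝ} (hx : x ∈ Ioo (-1) 1) :
    artanh x = (log (1 + x) - log (1 - x)) / 2 := by
  rw [artanh_eq_half_log (Ioo_subset_Icc_self hx), log_div (by grind) (by grind)]
  ring

lemma artanh_neg_eq_neg (x : ℝ) : artanh (-x) = -artanh x := by
  rw [artanh, artanh, ← log_inv, ← sqrt_inv, inv_div, sub_neg_eq_add, ← sub_eq_add_neg]

lemma hasDerivAt_artanh {x : ℝ} (hx : x ∈ Ioo (-1) 1) :
    HasDerivAt artanh (1 - x ^ 2)⁻¹ x := by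
  have h₁ : 1 + x ≠ 0 := by grind
  have h₂ : 1 - x ≠ 0 := by grind
  have hlog : HasDerivAt (fun y => (log (1 + y) - log (1 - y)) / 2) (1 - x ^ 2)⁻¹ x := by
    refine ((((hasDerivAt_id x).const_add 1).log h₁).sub
      (((hasDerivAt_id x).const_sub 1).log h₂)).div_const 2 |>.congr_deriv ?_
    rw [id, show 1 - x ^ 2 = (1 + x) * (1 - x) by ring]
    field_simp
    ring
  exact hlog.congr_of_eventuallyEq <| eventually_of_mem (isOpen_Ioo.mem_nhds hx)
    fun y hy => artanh_eq_half_log_sub hy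

lemma eq_tanh_iff_artanh_eq {x y : ℝ} (hx : x ∈ Ioo (-1) 1) : x = tanh y ↔ artanh x = y :=
  ⟨fun h => h ▸ artanh_tanh y, fun h => h ▸ (tanh_artanh hx).symm⟩

lemma continuousOn_artanh : ContinuousOn artanh (Ioo (-1) 1) :=
  fun _ hx => (hasDerivAt_artanh hx).continuousAt.continuousWithinAt

lemma strictConvexOn_artanh : StrictConvexOn ℝ (Ico 0 1) artanh := by
  refine StrictMonoOn.strictConvexOn_of_deriv (convex_Ico 0 1)
    (continuousOn_artanh.mono fun x hx => ⟨by linarith [hx.1], hx.2⟩) ?_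
  rw [interior_Ico]
  intro x hx y hy hxy
  rw [(hasDerivAt_artanh ⟨by linarith [hx.1], hx.2⟩).deriv,
    (hasDerivAt_artanh ⟨by linarith [hy.1], hy.2⟩).deriv]
  gcongr
  · nlinarith [hy.1, hy.2]
  · exact hx.1.le

lemma strictMonoOn_artanh_div : StrictMonoOn (fun x => artanh x / x) (Ioo 0 1) := by
  intro x hx y hy hxy
  simpa using strictConvexOn_artanh.secant_strict_mono (a := 0) ⟨le_rfl, one_pos⟩
    (Ioo_subset_Ico_self hx) (Ioo_subset_Ico_self hy) hx.1.ne' hy.1.ne' hxy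

lemma exists_artanh_eq_mul {c : ℝ} (hc : 1 < c) : ∃ m ∈ Ioo (0 : ℝ) 1, artanh m = c * m := by
  have htanh : 0 < tanh c := by
    rw [tanh_eq_sinh_div_cosh]; exact div_pos (sinh_pos_iff.2 (by linarith)) (cosh_pos c)
  -- `artanh x / x` is below `c` near `0⁺` (it tends to `artanh' 0 = 1`), above `c` at `tanh c`
  have hslope : ∀ᶠ z in 𝓝[>] 0, slope artanh 0 z < c :=
    (hasDerivAt_artanh (by norm_num)).hasDerivWithinAt.limsup_slope_le' (lt_irrefl (0 : ℝ))
      (by simpa using hc)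
  obtain ⟨z, hz, hz_mem⟩ := (hslope.and (Ioo_mem_nhdsGT htanh)).exists
  rw [slope_def_field, artanh_zero, sub_zero, sub_zero] at hz
  have hcont : ContinuousOn (fun x => artanh x / x) (Icc z (tanh c)) :=
    (continuousOn_artanh.mono fun x hx =>
      ⟨by linarith [hx.1, hz_mem.1], hx.2.trans_lt (tanh_lt_one c)⟩).div
        continuousOn_id fun x hx => by linarith [hx.1, hz_mem.1]
  have hend : c ≤ artanh (tanh c) / tanh c := by
    rw [artanh_tanh, le_div_iff₀ htanh]
    nlinarith [tanh_lt_one c]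
  obtain ⟨m, hm, hm_eq⟩ := intermediate_value_Icc hz_mem.2.le hcont ⟨hz.le, hend⟩
  have hm0 : 0 < m := hz_mem.1.trans_le hm.1
  exact ⟨m, ⟨hm0, hm.2.trans_lt (tanh_lt_one c)⟩, by simpa [div_eq_iff hm0.ne'] using hm_eq⟩

lemma entI_neg (x : ℝ) : entI (-x) = entI x := by
  simp only [entI, sub_neg_eq_add, ← sub_eq_add_neg]
  ring

lemma entI_zero : entI 0 = 0 := by simp [entI]

lemma continuous_entI : Continuous entI :=
  ((continuous_mul_log.comp (continuous_const_add 1)).add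
    (continuous_mul_log.comp (continuous_sub_left 1))).div_const 2

lemma hasDerivAt_entI {x : ℝ} (hx : x ∈ Ioo (-1) 1) : HasDerivAt entI (artanh x) x := by
  have h₁ : 1 + x ≠ 0 := by grind
  have h₂ : 1 - x ≠ 0 := by grind
  have hplus := (hasDerivAt_id x).const_add 1
  have hminus := (hasDerivAt_id x).const_sub 1
  refine ((hplus.mul (hplus.log h₁)).add (hminus.mul (hminus.log h₂))).div_const 2
    |>.congr_deriv ?_
  rw [artanh_eq_half_log_sub hx, id]
  field_simp
  ring

lemma convexOn_entI : ConvexOn ℝ (Icc (-1) 1) entI := by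
  refine MonotoneOn.convexOn_of_deriv (convex_Icc _ _) continuous_entI.continuousOn ?_ ?_ <;>
    rw [interior_Icc]
  · exact fun x hx => (hasDerivAt_entI hx).differentiableAt.differentiableWithinAt
  · exact strictMonoOn_artanh.monotoneOn.congr fun x hx => (hasDerivAt_entI hx).deriv.symm

/-- The pressure of the one-species Curie–Weiss model at coupling `c`. -/
noncomputable def cwPressure (c x : ℝ) : ℝ := c / 2 * x ^ 2 - entI x

lemma cwPressure_neg (c x : ℝ) : cwPressure c (-x) = cwPressure c x := by
  simp [cwPressure, entI_neg]

lemma cwPressure_zero (c : ℝ) : cwPressure c 0 = 0 := by simp [cwPressure, entI_zero]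

lemma continuous_cwPressure (c : ℝ) : Continuous (cwPressure c) :=
  (continuous_const.mul (continuous_pow 2)).sub continuous_entI

lemma hasDerivAt_cwPressure (c : ℝ) {x : ℝ} (hx : x ∈ Ioo (-1) 1) :
    HasDerivAt (cwPressure c) (c * x - artanh x) x := by
  refine ((hasDerivAt_pow 2 x).const_mul (c / 2)).sub (hasDerivAt_entI hx) |>.congr_deriv ?_
  ring

section FixedPoint

variable {c m x : ℝ}

lemma artanh_lt_mul_of_mem_Ioo_zero (hm : m ∈ Ioo 0 1) (hfix : artanh m = c * m)
    (hx : x ∈ Ioo 0 m) : artanh x < c * x := by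
  have : artanh x / x < artanh m / m := strictMonoOn_artanh_div ⟨hx.1, hx.2.trans hm.2⟩ hm hx.2
  rwa [hfix, mul_div_cancel_right₀ _ hm.1.ne', div_lt_iff₀ hx.1] at this

lemma mul_lt_artanh_of_mem_Ioo_one (hm : m ∈ Ioo 0 1) (hfix : artanh m = c * m)
    (hx : x ∈ Ioo m 1) : c * x < artanh x := by
  have hx0 : 0 < x := hm.1.trans hx.1
  have : artanh m / m < artanh x / x := strictMonoOn_artanh_div hm ⟨hx0, hx.2⟩ hx.1
  rwa [hfix, mul_div_cancel_right₀ _ hm.1.ne', lt_div_iff₀ hx0] at this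

lemma eq_of_artanh_eq_mul (hm : m ∈ Ioo 0 1) (hfix : artanh m = c * m)
    (hx : x ∈ Ioo 0 1) (hxfix : artanh x = c * x) : x = m :=
  strictMonoOn_artanh_div.injOn hx hm <| by
    simp only [hxfix, hfix, mul_div_cancel_right₀ _ hx.1.ne', mul_div_cancel_right₀ _ hm.1.ne']

lemma eq_zero_or_eq_or_eq_neg_of_artanh_eq_mul (hm : m ∈ Ioo 0 1) (hfix : artanh m = c * m)
    (hx : x ∈ Ioo (-1) 1) (hxfix : artanh x = c * x) : x = 0 ∨ x = m ∨ x = -m := by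
  rcases lt_trichotomy x 0 with hneg | rfl | hpos
  · refine Or.inr <| Or.inr <| neg_eq_iff_eq_neg.1 <| eq_of_artanh_eq_mul hm hfix
      ⟨neg_pos.2 hneg, by linarith [hx.1]⟩ ?_
    rw [artanh_neg_eq_neg, hxfix]
    ring
  · exact Or.inl rfl
  · exact Or.inr <| Or.inl <| eq_of_artanh_eq_mul hm hfix ⟨hpos, hx.2⟩ hxfix

lemma strictMonoOn_cwPressure (hm : m ∈ Ioo 0 1) (hfix : artanh m = c * m) :
    StrictMonoOn (cwPressure c) (Icc 0 m) := by
  refine strictMonoOn_of_deriv_pos (convex_Icc 0 m) (continuous_cwPressure c).continuousOn ?_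
  rw [interior_Icc]
  intro x hx
  rw [(hasDerivAt_cwPressure c ⟨by linarith [hx.1], hx.2.trans hm.2⟩).deriv]
  linarith [artanh_lt_mul_of_mem_Ioo_zero hm hfix hx]

lemma antitoneOn_cwPressure (hm : m ∈ Ioo 0 1) (hfix : artanh m = c * m) :
    AntitoneOn (cwPressure c) (Icc m 1) := by
  have hderiv (x : ℝ) (hx : x ∈ Ioo m 1) :=
    hasDerivAt_cwPressure c ⟨by linarith [hx.1, hm.1], hx.2⟩
  refine antitoneOn_of_deriv_nonpos (convex_Icc m 1) (continuous_cwPressure c).continuousOn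
    ?_ ?_ <;> rw [interior_Icc]
  · exact fun x hx => (hderiv x hx).differentiableAt.differentiableWithinAt
  · intro x hx
    rw [(hderiv x hx).deriv]
    linarith [mul_lt_artanh_of_mem_Ioo_one hm hfix hx]

lemma cwPressure_le (hm : m ∈ Ioo 0 1) (hfix : artanh m = c * m) (hx : x ∈ Icc (-1) 1) :
    cwPressure c x ≤ cwPressure c m := by
  wlog hx0 : 0 ≤ x generalizing x
  · rw [← cwPressure_neg]
    exact this ⟨by linarith, by linarith [hx.1]⟩ (by linarith)
  rcases le_total x m with hxm | hmx
  · exact (strictMonoOn_cwPressure hm hfix).monotoneOn ⟨hx0, hxm⟩ ⟨hm.1.le, le_rfl⟩ hxm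
  · exact antitoneOn_cwPressure hm hfix ⟨le_rfl, hm.2.le⟩ ⟨hmx, hx.2⟩ hmx

end FixedPoint

lemma not_isLocalMax_cwPressure_zero {c : ℝ} (hc : 1 < c) : ¬ IsLocalMax (cwPressure c) 0 := by
  intro hmax
  obtain ⟨m, hm, hfix⟩ := exists_artanh_eq_mul hc
  obtain ⟨t, hle, ht⟩ :=
    ((hmax.filter_mono nhdsWithin_le_nhds).and (Ioo_mem_nhdsGT hm.1)).exists
  exact (strictMonoOn_cwPressure hm hfix ⟨le_rfl, hm.1.le⟩ ⟨ht.1.le, ht.2.le⟩ ht.1).not_ge hle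

section Bipartite

variable {β J11 J12 : ℝ}

lemma fSym_swap (β J11 J12 a b : ℝ) : fSym β J11 J12 (b, a) = fSym β J11 J12 (a, b) := by
  simp only [fSym]
  ring

lemma fSym_diag (β J11 J12 t : ℝ) :
    fSym β J11 J12 (t, t) = cwPressure (β * (J11 + J12) / 2) t := by
  simp only [fSym, cwPressure]
  ring

lemma fSym_le {a b : ℝ} (ha : a ∈ Icc (-1) 1) (hb : b ∈ Icc (-1) 1) :
    fSym β J11 J12 (a, b) ≤
      cwPressure (β * (J11 + J12) / 2) ((a + b) / 2) + β * (J11 - J12) / 16 * (a - b) ^ 2 := by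
  have hconv := convexOn_entI.2 ha hb (by norm_num : (0 : ℝ) ≤ 1 / 2)
    (by norm_num : (0 : ℝ) ≤ 1 / 2) (by norm_num)
  simp only [smul_eq_mul] at hconv
  rw [show 1 / 2 * a + 1 / 2 * b = (a + b) / 2 by ring] at hconv
  simp only [fSym, cwPressure]
  linarith

lemma hasDerivAt_fSym_fst (β J11 J12 b : ℝ) {a : ℝ} (ha : a ∈ Ioo (-1) 1) :
    HasDerivAt (fun x => fSym β J11 J12 (x, b))
      (β / 4 * (J11 * a + J12 * b) - artanh a / 2) a := by
  have hsq := hasDerivAt_pow 2 a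
  refine ((((hsq.add_const (b ^ 2)).const_mul J11).add
    (((hasDerivAt_id a).const_mul (2 * J12)).mul_const b)).const_mul (β / 8)).sub
    (((hasDerivAt_entI ha).add_const (entI b)).div_const 2) |>.congr_deriv ?_
  ring

lemma isCritPt_iff (β J11 J12 a b : ℝ) :
    IsCritPt β J11 J12 (a, b) ↔ a ∈ Ioo (-1) 1 ∧ b ∈ Ioo (-1) 1 ∧
      artanh a = β / 2 * (J11 * a + J12 * b) ∧ artanh b = β / 2 * (J11 * b + J12 * a) := by
  refine and_congr_right fun ha => and_congr_right fun hb => ?_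
  have hsnd : (fun y => fSym β J11 J12 (a, y)) = fun y => fSym β J11 J12 (y, a) :=
    funext fun y => fSym_swap β J11 J12 y a
  rw [hsnd, (hasDerivAt_fSym_fst β J11 J12 b ha).deriv,
    (hasDerivAt_fSym_fst β J11 J12 a hb).deriv]
  constructor <;> rintro ⟨h₁, h₂⟩ <;> constructor <;> linarith

lemma isCritPt_diag_iff (β J11 J12 t : ℝ) :
    IsCritPt β J11 J12 (t, t) ↔ t ∈ Ioo (-1) 1 ∧ artanh t = β * (J11 + J12) / 2 * t := by
  rw [isCritPt_iff]
  constructor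
  · rintro ⟨ht, -, h, -⟩
    exact ⟨ht, by rw [h]; ring⟩
  · rintro ⟨ht, h⟩
    exact ⟨ht, ht, by rw [h]; ring, by rw [h]; ring⟩

lemma eq_of_isCritPt (hβ : 0 < β) (hJ : J11 < J12) {a b : ℝ}
    (h : IsCritPt β J11 J12 (a, b)) : a = b := by
  obtain ⟨ha, hb, h₁, h₂⟩ := (isCritPt_iff β J11 J12 a b).1 h
  by_contra hne
  have hmono : 0 < (artanh a - artanh b) * (a - b) := by
    rcases lt_or_gt_of_ne hne with hlt | hgt
    · exact mul_pos_of_neg_of_neg (sub_neg.2 (strictMonoOn_artanh ha hb hlt)) (sub_neg.2 hlt)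
    · exact mul_pos (sub_pos.2 (strictMonoOn_artanh hb ha hgt)) (sub_pos.2 hgt)
  have hcoupling : (artanh a - artanh b) * (a - b) = β / 2 * (J11 - J12) * (a - b) ^ 2 := by
    rw [h₁, h₂]
    ring
  have hcoupling_neg : β / 2 * (J11 - J12) * (a - b) ^ 2 < 0 :=
    mul_neg_of_neg_of_pos (mul_neg_of_pos_of_neg (by positivity) (by linarith))
      (sq_pos_of_ne_zero (sub_ne_zero.2 hne))
  linarith

lemma setOf_isCritPt (hβ : 0 < β) (hJ : J11 < J12) {m : ℝ} (hm : m ∈ Ioo 0 1)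
    (hfix : artanh m = β * (J11 + J12) / 2 * m) :
    {μ : ℝ × ℝ | IsCritPt β J11 J12 μ} = {(0, 0), (m, m), (-m, -m)} := by
  have hm' : m ∈ Ioo (-1) 1 := ⟨by linarith [hm.1], hm.2⟩
  ext μ
  constructor
  · obtain ⟨a, b⟩ := μ
    intro h
    obtain rfl := eq_of_isCritPt hβ hJ h
    obtain ⟨ha, hafix⟩ := (isCritPt_diag_iff β J11 J12 a).1 h
    rcases eq_zero_or_eq_or_eq_neg_of_artanh_eq_mul hm hfix ha hafix with rfl | rfl | rfl <;> simp
  · rintro (rfl | rfl | rfl) <;> refine (isCritPt_diag_iff β J11 J12 _).2 ⟨?_, ?_⟩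
    · norm_num
    · simp
    · exact hm'
    · exact hfix
    · exact ⟨by linarith [hm'.2], by linarith [hm'.1]⟩
    · rw [artanh_neg_eq_neg, hfix]
      ring

lemma isLocalMax_fSym_diag (hβ : 0 ≤ β) (hJ : J11 ≤ J12) {t : ℝ} (ht : t ∈ Ioo (-1) 1)
    (hmax : ∀ x ∈ Icc (-1) 1,
      cwPressure (β * (J11 + J12) / 2) x ≤ cwPressure (β * (J11 + J12) / 2) t) :
    IsLocalMax (fSym β J11 J12) (t, t) := by
  filter_upwards [prod_mem_nhds (Icc_mem_nhds ht.1 ht.2) (Icc_mem_nhds ht.1 ht.2)]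
    with ⟨a, b⟩ ⟨ha, hb⟩
  have hquad : β * (J11 - J12) / 16 * (a - b) ^ 2 ≤ 0 := by
    nlinarith [mul_nonneg hβ (sub_nonneg.2 hJ), sq_nonneg (a - b)]
  calc fSym β J11 J12 (a, b)
      ≤ cwPressure (β * (J11 + J12) / 2) ((a + b) / 2) + β * (J11 - J12) / 16 * (a - b) ^ 2 :=
        fSym_le ha hb
    _ ≤ cwPressure (β * (J11 + J12) / 2) t := by
        linarith [hmax ((a + b) / 2) ⟨by linarith [ha.1, hb.1], by linarith [ha.2, hb.2]⟩]
    _ = fSym β J11 J12 (t, t) := (fSym_diag β J11 J12 t).symm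

lemma not_isLocalMax_fSym_zero (hc : 1 < β * (J11 + J12) / 2) :
    ¬ IsLocalMax (fSym β J11 J12) (0, 0) := fun hmax =>
  not_isLocalMax_cwPressure_zero hc <| by
    simpa [Function.comp_def, fSym_diag] using
      hmax.comp_continuous (g := fun t : ℝ => (t, t)) (by fun_prop)

lemma not_isLocalMin_fSym_zero (hβ : 0 < β) (hJ : J11 < J12) :
    ¬ IsLocalMin (fSym β J11 J12) (0, 0) := by
  intro hmin
  have hanti : IsLocalMin (fun t : ℝ => fSym β J11 J12 (t, -t)) 0 := by
    simpa [Function.comp_def] using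
      IsLocalMin.comp_continuous (g := fun t : ℝ => (t, -t)) (by simpa using hmin) (by fun_prop)
  obtain ⟨t, hle, ht0, ht⟩ := ((hanti.filter_mono nhdsWithin_le_nhds).and
    (inter_mem_nhdsWithin {0}ᶜ (Icc_mem_nhds (by norm_num : (-1 : ℝ) < 0) one_pos))).exists
  have hlt : fSym β J11 J12 (t, -t) < fSym β J11 J12 (0, 0) := by
    have hbound := fSym_le (β := β) (J11 := J11) (J12 := J12) (b := -t) ht
      ⟨by linarith [ht.2], by linarith [ht.1]⟩
    have hquad : β * (J11 - J12) / 16 * (t - -t) ^ 2 < 0 := by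
      have hsq : 0 < (t - -t) ^ 2 := sq_pos_of_ne_zero (by simpa [two_mul] using ht0)
      nlinarith [mul_pos hβ (sub_pos.2 hJ)]
    rw [fSym_diag, cwPressure_zero]
    simp only [add_neg_cancel, zero_div, cwPressure_zero] at hbound
    linarith
  exact hlt.not_ge (by simpa using hle)

end Bipartite

theorem prop2_case2b_general (β J11 J12 : ℝ) (hJ12 : |J11| < J12)
    (hβ : 2 / (J11 + J12) < β) :
    ∃ xt : ℝ, xt ∈ Set.Ioo (0 : ℝ) 1 ∧
      xt = Real.tanh (β * (J11 + J12) / 2 * xt) ∧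
      (∀ y ∈ Set.Ioo (0 : ℝ) 1, y = Real.tanh (β * (J11 + J12) / 2 * y) → y = xt) ∧
      {μ : ℝ × ℝ | IsCritPt β J11 J12 μ} = {(0, 0), (xt, xt), (-xt, -xt)} ∧
      (¬ IsLocalMax (fSym β J11 J12) (0, 0) ∧ ¬ IsLocalMin (fSym β J11 J12) (0, 0)) ∧
      IsLocalMax (fSym β J11 J12) (xt, xt) ∧ IsLocalMax (fSym β J11 J12) (-xt, -xt) := by
  have hJ : J11 < J12 := (le_abs_self J11).trans_lt hJ12
  have hsum : 0 < J11 + J12 := by linarith [neg_abs_le J11]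
  have hβ0 : 0 < β := (div_pos two_pos hsum).trans hβ
  have hc : 1 < β * (J11 + J12) / 2 := by
    rw [div_lt_iff₀ hsum] at hβ
    linarith
  obtain ⟨m, hm, hfix⟩ := exists_artanh_eq_mul hc
  have hm' : m ∈ Ioo (-1) 1 := ⟨by linarith [hm.1], hm.2⟩
  have hmax (x : ℝ) (hx : x ∈ Icc (-1) 1) := cwPressure_le hm hfix hx
  refine ⟨m, hm, (eq_tanh_iff_artanh_eq hm').2 hfix, fun y hy h => ?_,
    setOf_isCritPt hβ0 hJ hm hfix, ⟨not_isLocalMax_fSym_zero hc, not_isLocalMin_fSym_zero hβ0 hJ⟩,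
    isLocalMax_fSym_diag hβ0.le hJ.le hm' hmax, isLocalMax_fSym_diag hβ0.le hJ.le ?_ ?_⟩
  · exact eq_of_artanh_eq_mul hm hfix hy
      ((eq_tanh_iff_artanh_eq ⟨by linarith [hy.1], hy.2⟩).1 h)
  · exact ⟨by linarith [hm.2], by linarith [hm.1]⟩
  · simpa only [cwPressure_neg] using hmax

/-- Proposition 2, case 2b: for J₁₁ < 0, J₁₂ > |J₁₁| (so λ_M = J₁₁ + J₁₂ > 0), if
β > 2/λ_M then f has exactly three critical points: (0,0) (a saddle point) and ±(x̃,x̃)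
(local maximum points), where x̃ is the unique solution in (0,1) of
x = tanh((βλ_M/2)x). -/
theorem prop2_case2b (β J11 J12 : ℝ) (hJ11 : J11 < 0) (hJ12 : |J11| < J12)
    (hβ0 : 0 < β) (hβ : 2 / (J11 + J12) < β) :
    ∃ xt : ℝ, xt ∈ Set.Ioo (0 : ℝ) 1 ∧
      xt = Real.tanh (β * (J11 + J12) / 2 * xt) ∧
      (∀ y ∈ Set.Ioo (0 : ℝ) 1, y = Real.tanh (β * (J11 + J12) / 2 * y) → y = xt) ∧
      {μ : ℝ × ℝ | IsCritPt β J11 J12 μ} = {(0, 0), (xt, xt), (-xt, -xt)} ∧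
      (¬ IsLocalMax (fSym β J11 J12) (0, 0) ∧ ¬ IsLocalMin (fSym β J11 J12) (0, 0)) ∧
      IsLocalMax (fSym β J11 J12) (xt, xt) ∧ IsLocalMax (fSym β J11 J12) (-xt, -xt) :=
  prop2_case2b_general β J11 J12 hJ12 hβ
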